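/- Let E be a complete normed real vector space, let α ∈ (0,1] and C > 0, and let f : (0,1/2) → E be a function such that ‖f(ε) − f(δ)‖ ≤ C·ε^α·log(1/δ) for all 0 < δ < ε < 1/2. Then there exists L ∈ E such that f(ε) tends to L as ε tends to 0 from the right; moreover, for every b ∈ (0,α) there exists C' > 0 such that ‖L − f(ε)‖ ≤ C'·ε^b for all ε ∈ (0,1/2). -/
import Mathlib


open Filter Set

private lemma pow_rpow_comm' (x : ℝ) (hx : 0 ≤ x) (y : ℝ) (n : ℕ) :
    ((x ^ n : ℝ)) ^ y = (x ^ y) ^ n := by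
  rw [← Real.rpow_natCast x n, ← Real.rpow_mul hx, mul_comm, Real.rpow_mul hx,
    Real.rpow_natCast]

/-- Key numeric bound: `C * (2^{-(n+1)})^α * (n+3) * log 2 ≤ K * (2^{-b})^n`. -/
private lemma aux_bound (α b C : ℝ) (hb : 0 < b) (hba : b < α) (hC : 0 < C) :
    ∃ K > 0, ∀ n : ℕ,
      C * (((1/2 : ℝ) ^ (n+1)) ^ α) * (((n : ℝ) + 3) * Real.log 2)
        ≤ K * (((1/2 : ℝ) ^ b) ^ n) := by
  have h2 : (0:ℝ) < 1/2 := by norm_num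
  set θ : ℝ := (1/2 : ℝ) ^ (α - b) with hθdef
  have hθpos : 0 < θ := Real.rpow_pos_of_pos h2 _
  have hθlt : θ < 1 := Real.rpow_lt_one (by norm_num) (by norm_num) (by linarith)
  set t : ℝ := θ⁻¹ - 1 with htdef
  have hinv : 1 < θ⁻¹ := (one_lt_inv₀ hθpos).mpr hθlt
  have ht : 0 < t := by simp only [htdef]; linarith
  set M : ℝ := 3 * max 1 t⁻¹ with hMdef
  have hM3 : (3:ℝ) ≤ M := by
    have : (1:ℝ) ≤ max 1 t⁻¹ := le_max_left _ _
    nlinarith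
  have hMt : (3:ℝ) ≤ M * t := by
    have h1 : t⁻¹ ≤ max 1 t⁻¹ := le_max_right _ _
    have h2' : 3 * t⁻¹ * t ≤ M * t := by
      apply mul_le_mul_of_nonneg_right _ ht.le
      nlinarith
    rwa [mul_assoc, inv_mul_cancel₀ ht.ne', mul_one] at h2'
  have hkey : ∀ n : ℕ, ((n : ℝ) + 3) * θ ^ n ≤ M := by
    intro n
    have hpow : 1 + (n : ℝ) * t ≤ (1 + t) ^ n := by
      have := one_add_mul_le_pow (by linarith : (-2:ℝ) ≤ t) n
      linarith
    have h1t : (1 + t) = θ⁻¹ := by simp [htdef]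
    have hθn : θ ^ n ≤ (1 + (n:ℝ) * t)⁻¹ := by
      rw [h1t, inv_pow] at hpow
      have hpos : (0:ℝ) < 1 + (n:ℝ) * t := by positivity
      have := inv_anti₀ hpos hpow
      simpa [inv_inv] using this
    have hn : ((n:ℝ) + 3) ≤ M * (1 + (n:ℝ) * t) := by
      have hn0 : (0:ℝ) ≤ (n:ℝ) := Nat.cast_nonneg n
      nlinarith
    calc ((n : ℝ) + 3) * θ ^ n ≤ ((n:ℝ) + 3) * (1 + (n:ℝ) * t)⁻¹ :=
          mul_le_mul_of_nonneg_left hθn (by positivity)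
      _ ≤ M := by
          have hpos : (0:ℝ) < 1 + (n:ℝ)*t := by positivity
          rw [← div_eq_mul_inv, div_le_iff₀ hpos]
          nlinarith
  refine ⟨C * Real.log 2 * M, by positivity, fun n => ?_⟩
  have hlog2 : (0:ℝ) < Real.log 2 := Real.log_pos (by norm_num)
  have hsplit : (1/2 : ℝ) ^ α = (1/2 : ℝ) ^ b * θ := by
    rw [hθdef, ← Real.rpow_add h2]; ring_nf
  have hpow1 : ((1/2 : ℝ) ^ (n+1)) ^ α = ((1/2:ℝ) ^ α) ^ (n+1) :=
    pow_rpow_comm' _ (by norm_num) _ _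
  have hαpos : (0:ℝ) < (1/2:ℝ) ^ α := Real.rpow_pos_of_pos h2 _
  have hα1 : (1/2:ℝ) ^ α ≤ 1 :=
    Real.rpow_le_one (by norm_num) (by norm_num) (by linarith)
  have hle : ((1/2:ℝ) ^ α) ^ (n+1) ≤ ((1/2:ℝ)^α) ^ n :=
    pow_le_pow_of_le_one hαpos.le hα1 (Nat.le_succ n)
  have hbpos : (0:ℝ) < (1/2:ℝ) ^ b := Real.rpow_pos_of_pos h2 _
  calc C * (((1/2 : ℝ) ^ (n+1)) ^ α) * (((n : ℝ) + 3) * Real.log 2)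
      = C * Real.log 2 * (((1/2:ℝ)^α)^(n+1) * ((n:ℝ)+3)) := by
        rw [hpow1]; ring
    _ ≤ C * Real.log 2 * (((1/2:ℝ)^α)^n * ((n:ℝ)+3)) := by
        apply mul_le_mul_of_nonneg_left _ (by positivity)
        exact mul_le_mul_of_nonneg_right hle (by positivity)
    _ = C * Real.log 2 * (((1/2:ℝ)^b)^n * (((n:ℝ)+3) * θ^n)) := by
        rw [hsplit, mul_pow]; ring
    _ ≤ C * Real.log 2 * (((1/2:ℝ)^b)^n * M) := by
        apply mul_le_mul_of_nonneg_left _ (by positivity)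
        exact mul_le_mul_of_nonneg_left (hkey n) (by positivity)
    _ = C * Real.log 2 * M * ((1/2:ℝ)^b)^n := by ring

/-- Abstract dyadic-summation convergence lemma: if `f : (0,1/2) → E` satisfies
`‖f ε - f δ‖ ≤ C * ε^α * log(1/δ)` for `0 < δ < ε < 1/2`, then `f` converges as
`ε → 0⁺` to some `L`, with rate `ε^b` for every `b ∈ (0, α)`. -/
theorem stmt_0 {E : Type*} [NormedAddCommGroup E] [NormedSpace ℝ E] [CompleteSpace E]
    (α C : ℝ) (hα : α ∈ Set.Ioc (0 : ℝ) 1) (hC : 0 < C)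
    (f : ℝ → E)
    (hf : ∀ δ ε : ℝ, 0 < δ → δ < ε → ε < 1 / 2 →
      ‖f ε - f δ‖ ≤ C * ε ^ α * Real.log (1 / δ)) :
    ∃ L : E, Tendsto f (nhdsWithin 0 (Set.Ioi (0 : ℝ))) (nhds L) ∧
      ∀ b ∈ Set.Ioo (0 : ℝ) α, ∃ C' > (0 : ℝ), ∀ ε ∈ Set.Ioo (0 : ℝ) (1 / 2),
        ‖L - f ε‖ ≤ C' * ε ^ b := by
  obtain ⟨hα0, hα1⟩ := hα
  have h2 : (0:ℝ) < 1/2 := by norm_num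
  set g : ℕ → E := fun n => f ((1/2:ℝ) ^ (n+2)) with hg
  have hmem : ∀ n : ℕ, (0:ℝ) < (1/2:ℝ)^n := fun n => by positivity
  have hlt : ∀ n : ℕ, ((1/2:ℝ)^(n+2)) < 1/2 := by
    intro n
    calc ((1/2:ℝ)^(n+2)) ≤ (1/2:ℝ)^2 := by
          apply pow_le_pow_of_le_one (by norm_num) (by norm_num); omega
      _ < 1/2 := by norm_num
  have hlogpow : ∀ m : ℕ, Real.log (1 / ((1/2:ℝ)^m)) = (m:ℝ) * Real.log 2 := by
    intro m
    rw [one_div, ← inv_pow, Real.log_pow]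
    norm_num
  -- step bound for the dyadic sequence, for any exponent b ∈ (0, α)
  have step : ∀ b, 0 < b → b < α → ∃ K > 0,
      (∀ n : ℕ, dist (g n) (g (n+1)) ≤ K * (((1/2:ℝ)^b)^n)) ∧
      (∀ n : ℕ, ∀ ε : ℝ, (1/2:ℝ)^(n+2) < ε → ε ≤ (1/2:ℝ)^(n+1) → ε < 1/2 →
        ‖f ε - g (n+1)‖ ≤ K * (((1/2:ℝ)^b)^n)) := by
    intro b hb hba
    obtain ⟨K, hK, hKn⟩ := aux_bound α b C hb hba hC
    refine ⟨K, hK, fun n => ?_, fun n ε h1 h2' h3 => ?_⟩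
    · have hbd := hf ((1/2:ℝ)^(n+3)) ((1/2:ℝ)^(n+2)) (hmem _)
        (pow_lt_pow_right_of_lt_one₀ (by norm_num) (by norm_num) (by omega)) (hlt n)
      rw [dist_eq_norm]
      have heq : ‖g n - g (n+1)‖ = ‖f ((1/2:ℝ)^(n+2)) - f ((1/2:ℝ)^(n+3))‖ := rfl
      rw [heq]
      refine hbd.trans ?_
      rw [hlogpow (n+3)]
      push_cast
      calc C * ((1/2:ℝ)^(n+2)) ^ α * (((n:ℝ)+3) * Real.log 2)
          ≤ C * ((1/2:ℝ)^(n+1)) ^ α * (((n:ℝ)+3) * Real.log 2) := by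
            apply mul_le_mul_of_nonneg_right _ (by positivity)
            apply mul_le_mul_of_nonneg_left _ hC.le
            apply Real.rpow_le_rpow (by positivity) _ hα0.le
            apply pow_le_pow_of_le_one (by norm_num) (by norm_num); omega
        _ ≤ K * ((1/2:ℝ)^b)^n := hKn n
    · have hbd := hf ((1/2:ℝ)^(n+3)) ε (hmem _)
        (lt_trans (pow_lt_pow_right_of_lt_one₀ (by norm_num) (by norm_num) (by omega)) h1) h3
      have heq : ‖f ε - g (n+1)‖ = ‖f ε - f ((1/2:ℝ)^(n+3))‖ := rfl
      rw [heq]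
      refine hbd.trans ?_
      rw [hlogpow (n+3)]
      push_cast
      calc C * ε ^ α * (((n:ℝ)+3) * Real.log 2)
          ≤ C * ((1/2:ℝ)^(n+1)) ^ α * (((n:ℝ)+3) * Real.log 2) := by
            apply mul_le_mul_of_nonneg_right _ (by positivity)
            apply mul_le_mul_of_nonneg_left _ hC.le
            exact Real.rpow_le_rpow (le_of_lt (lt_trans (hmem _) h1)) h2' hα0.le
        _ ≤ K * ((1/2:ℝ)^b)^n := hKn n
  -- existence of the limit
  have hb0 : 0 < α/2 := by linarith
  have hba0 : α/2 < α := by linarith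
  obtain ⟨K0, hK0, hstep0, _⟩ := step (α/2) hb0 hba0
  have hr0 : ((1/2:ℝ) ^ (α/2)) < 1 := Real.rpow_lt_one (by norm_num) (by norm_num) hb0
  have hcauchy : CauchySeq g := cauchySeq_of_le_geometric _ K0 hr0 hstep0
  obtain ⟨L, hL⟩ := cauchySeq_tendsto_of_complete hcauchy
  -- the rate estimate
  have key : ∀ b ∈ Set.Ioo (0:ℝ) α, ∃ C' > (0:ℝ), ∀ ε ∈ Set.Ioo (0:ℝ) (1/2),
      ‖L - f ε‖ ≤ C' * ε ^ b := by
    rintro b ⟨hb, hba⟩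
    obtain ⟨K, hK, hstep, hnear⟩ := step b hb hba
    set r : ℝ := (1/2:ℝ) ^ b with hrdef
    have hrpos : 0 < r := Real.rpow_pos_of_pos h2 _
    have hrlt : r < 1 := Real.rpow_lt_one (by norm_num) (by norm_num) hb
    have h1r : (0:ℝ) < 1 - r := by linarith
    have htail : ∀ n : ℕ, dist (g n) L ≤ K * r ^ n / (1 - r) :=
      dist_le_of_le_geometric_of_tendsto r K hrlt hstep hL
    have hCpos : (0:ℝ) < (K / (1 - r) + K) / r^2 :=
      div_pos (add_pos (div_pos hK h1r) hK) (by positivity)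
    refine ⟨(K / (1 - r) + K) / r^2, hCpos, ?_⟩
    rintro ε ⟨hε0, hε12⟩
    -- pick the dyadic scale of ε
    have hex : ∃ n : ℕ, (1/2:ℝ)^n < ε := exists_pow_lt_of_lt_one hε0 (by norm_num)
    have hn02 : 2 ≤ Nat.find hex := by
      rw [Nat.le_find_iff]
      intro m hm
      simp only [not_lt]
      interval_cases m
      · norm_num; linarith
      · norm_num; linarith
    obtain ⟨n, hn⟩ : ∃ n : ℕ, Nat.find hex = n + 2 := ⟨Nat.find hex - 2, by omega⟩
    have h1 : (1/2:ℝ)^(n+2) < ε := by rw [← hn]; exact Nat.find_spec hex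
    have h2' : ε ≤ (1/2:ℝ)^(n+1) := not_lt.mp (Nat.find_min hex (by omega))
    have hbound : ‖L - f ε‖ ≤ K * r^n / (1-r) + K * r^n := by
      calc ‖L - f ε‖ ≤ ‖L - g (n+1)‖ + ‖g (n+1) - f ε‖ := by
            have heq : L - f ε = (L - g (n+1)) + (g (n+1) - f ε) := by abel
            rw [heq]; exact norm_add_le _ _
        _ ≤ K * r^n / (1-r) + K * r^n := by
            apply add_le_add
            · rw [norm_sub_rev, ← dist_eq_norm]
              refine (htail (n+1)).trans ?_
              exact (div_le_div_iff_of_pos_right h1r).mpr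
                (mul_le_mul_of_nonneg_left
                  (pow_le_pow_of_le_one hrpos.le hrlt.le (Nat.le_succ n)) hK.le)
            · rw [norm_sub_rev]; exact hnear n ε h1 h2' hε12
    have hεb : r^2 * r^n ≤ ε ^ b := by
      have hlt' : ((1/2:ℝ)^(n+2)) ^ b < ε ^ b :=
        Real.rpow_lt_rpow (le_of_lt (hmem (n+2))) h1 hb
      rw [pow_rpow_comm' _ (by norm_num) b (n+2)] at hlt'
      calc r^2 * r^n = r ^ (n+2) := by ring
        _ ≤ ε ^ b := hlt'.le
    calc ‖L - f ε‖ ≤ K * r^n / (1-r) + K * r^n := hbound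
      _ = (K / (1 - r) + K) / r^2 * (r^2 * r^n) := by
          field_simp
      _ ≤ (K / (1 - r) + K) / r^2 * ε ^ b :=
          mul_le_mul_of_nonneg_left hεb hCpos.le
  refine ⟨L, ?_, key⟩
  -- convergence from the rate at b = α/2
  obtain ⟨C', hC', hrate⟩ := key (α/2) ⟨hb0, hba0⟩
  rw [tendsto_iff_norm_sub_tendsto_zero]
  have hbig : ∀ᶠ ε in nhdsWithin 0 (Set.Ioi (0:ℝ)), ε ∈ Set.Ioo (0:ℝ) (1/2) :=
    Ioo_mem_nhdsGT_of_mem (by norm_num : (0:ℝ) ∈ Set.Ico (0:ℝ) (1/2))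
  have hlim : Tendsto (fun ε : ℝ => C' * ε ^ (α/2)) (nhdsWithin 0 (Set.Ioi (0:ℝ))) (nhds 0) := by
    have hcont : Tendsto (fun ε : ℝ => ε ^ (α/2)) (nhds 0) (nhds ((0:ℝ) ^ (α/2))) :=
      (Real.continuousAt_rpow_const 0 (α/2) (Or.inr hb0.le)).tendsto
    rw [Real.zero_rpow hb0.ne'] at hcont
    have := (hcont.mono_left (nhdsWithin_le_nhds (s := Set.Ioi (0:ℝ)))).const_mul C'
    simpa using this
  apply squeeze_zero_norm' _ hlim
  filter_upwards [hbig] with ε hε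
  rw [norm_norm, ← norm_sub_rev]
  exact hrate ε hε
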